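/- arXiv:0811.1946 — 7 statements merged into one kernel-verified Lean document; each statement's English description precedes it below -/
import Mathlib

section
/- Let X be a set, and for i = 1, 2 let A_i = {1, 2, ..., M_i} (with M_i > 0) and f_i : A_i → X be a finite sequence with period p_i (the smallest positive integer p such that f_i(j) = f_i(j+p) whenever both j and j+p lie in A_i). Suppose there exist integers u and v such that for each i = v+1, v+2, ..., v+p_1+p_2, we have i ∈ A_1, u+i ∈ A_2, and f_1(i) = f_2(u+i). Then p_1 = p_2, and f_1(i) = f_2(u+i) whenever i ∈ A_1 and u+i ∈ A_2. -/
/-!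
If `f₁` and `f₂` agree (up to the shift `u`) on a window of length `p₁ + p₂`, then every
index of `f₂` is congruent modulo `p₂` to one whose `p₁`-translate stays in the window, so
`p₁` is a period of `f₂`; symmetrically `p₂` is a period of `f₁`, and minimality forces
`p₁ = p₂`. With a common period `p`, every index is congruent modulo `p` to one in the window,
so the two sequences agree wherever both are defined.
-/

/-- `IsPeriodicWith f M p` : `p` is a period for the finite sequence `f : {1,...,M} → X`,
i.e. `f j = f (j + p)` whenever both `j` and `j + p` lie in `{1,...,M}`. -/
def IsPeriodicWith {X : Type*} (f : ℤ → X) (M p : ℤ) : Prop :=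
  ∀ j : ℤ, 1 ≤ j → j + p ≤ M → f j = f (j + p)

namespace IsPeriodicWith

variable {X : Type*} {f g : ℤ → X} {M N p q : ℤ}

theorem apply_eq_apply_add_mul (hf : IsPeriodicWith f M p) (hp : 0 ≤ p) (n : ℕ) {a : ℤ}
    (ha : 1 ≤ a) (hb : a + n * p ≤ M) : f a = f (a + n * p) := by
  induction n generalizing a with
  | zero => simp
  | succ n ih =>
    have hn : (0 : ℤ) ≤ n * p := mul_nonneg n.cast_nonneg hp
    push_cast at hb ⊢
    calc f a = f (a + p) := hf a ha (by linarith)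
      _ = f (a + p + n * p) := ih (by linarith) (by linarith)
      _ = f (a + (n + 1) * p) := by ring_nf

theorem apply_eq_of_modEq (hf : IsPeriodicWith f M p) (hp : 0 < p) {a b : ℤ}
    (ha : 1 ≤ a) (haM : a ≤ M) (hb : 1 ≤ b) (hbM : b ≤ M) (hab : a ≡ b [ZMOD p]) :
    f a = f b := by
  wlog hle : a ≤ b generalizing a b
  · exact (this hb hbM ha haM hab.symm (by linarith)).symm
  obtain ⟨k, hk⟩ := Int.modEq_iff_dvd.mp hab
  lift k to ℕ using by nlinarith
  have hb_eq : b = a + k * p := by linarith [mul_comm p (k : ℤ)]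
  subst hb_eq
  exact hf.apply_eq_apply_add_mul hp.le k ha hbM

end IsPeriodicWith

theorem Int.exists_modEq_mem_window {p : ℤ} (hp : 0 < p) (j c : ℤ) :
    ∃ j', j' ≡ j [ZMOD p] ∧ c + 1 ≤ j' ∧ j' ≤ c + p := by
  refine ⟨c + 1 + (j - c - 1) % p, Int.modEq_iff_dvd.mpr ⟨(j - c - 1) / p, ?_⟩, ?_, ?_⟩
  · linarith [Int.emod_def (j - c - 1) p]
  · linarith [Int.emod_nonneg (j - c - 1) hp.ne']
  · linarith [Int.emod_lt_of_pos (j - c - 1) hp]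

section Window

variable {X : Type*} {f g : ℤ → X} {M N p q u v : ℤ}

theorem IsPeriodicWith.of_eq_on_window (hf : IsPeriodicWith f M p) (hg : IsPeriodicWith g N q)
    (hp : 0 ≤ p) (hq : 0 < q)
    (hwin : ∀ i : ℤ, v + 1 ≤ i → i ≤ v + p + q →
      (1 ≤ i ∧ i ≤ M) ∧ (1 ≤ u + i ∧ u + i ≤ N) ∧ f i = g (u + i)) :
    IsPeriodicWith g N p := by
  intro j hj hjp
  obtain ⟨j', hj'j, hj'lo, hj'hi⟩ := Int.exists_modEq_mem_window hq j (u + v)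
  obtain ⟨⟨hi1, -⟩, ⟨hj'1, hj'N⟩, hfg⟩ := hwin (j' - u) (by linarith) (by linarith)
  obtain ⟨⟨-, hipM⟩, ⟨hj'p1, hj'pN⟩, hfg'⟩ := hwin (j' - u + p) (by linarith) (by linarith)
  rw [add_sub_cancel] at hfg hj'1 hj'N
  rw [show u + (j' - u + p) = j' + p by ring] at hfg' hj'p1 hj'pN
  calc g j = g j' := hg.apply_eq_of_modEq hq hj (by linarith) hj'1 hj'N hj'j.symm
    _ = f (j' - u) := hfg.symm
    _ = f (j' - u + p) := hf _ hi1 hipM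
    _ = g (j' + p) := hfg'
    _ = g (j + p) := hg.apply_eq_of_modEq hq hj'p1 hj'pN (by linarith) hjp (hj'j.add_right p)

theorem IsPeriodicWith.eq_of_eq_on_window (hf : IsPeriodicWith f M p) (hg : IsPeriodicWith g N p)
    (hp : 0 < p)
    (hwin : ∀ i : ℤ, v + 1 ≤ i → i ≤ v + p →
      (1 ≤ i ∧ i ≤ M) ∧ (1 ≤ u + i ∧ u + i ≤ N) ∧ f i = g (u + i))
    {i : ℤ} (hi : 1 ≤ i) (hiM : i ≤ M) (hui : 1 ≤ u + i) (huiN : u + i ≤ N) :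
    f i = g (u + i) := by
  obtain ⟨i', hi'i, hi'lo, hi'hi⟩ := Int.exists_modEq_mem_window hp i v
  obtain ⟨⟨hi'1, hi'M⟩, ⟨hui'1, hui'N⟩, hfg⟩ := hwin i' hi'lo hi'hi
  calc f i = f i' := hf.apply_eq_of_modEq hp hi hiM hi'1 hi'M hi'i.symm
    _ = g (u + i') := hfg
    _ = g (u + i) := hg.apply_eq_of_modEq hp hui'1 hui'N hui huiN (hi'i.add_left u)

end Window

theorem stmt_0_general {X : Type*} (M₁ M₂ : ℤ)
    (f₁ f₂ : ℤ → X) (p₁ p₂ : ℤ)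
    (hp₁ : IsLeast {p : ℤ | 0 < p ∧ IsPeriodicWith f₁ M₁ p} p₁)
    (hp₂ : IsLeast {p : ℤ | 0 < p ∧ IsPeriodicWith f₂ M₂ p} p₂)
    (u v : ℤ)
    (hwin : ∀ i : ℤ, v + 1 ≤ i → i ≤ v + p₁ + p₂ →
      (1 ≤ i ∧ i ≤ M₁) ∧ (1 ≤ u + i ∧ u + i ≤ M₂) ∧ f₁ i = f₂ (u + i)) :
    p₁ = p₂ ∧ ∀ i : ℤ, 1 ≤ i → i ≤ M₁ → 1 ≤ u + i → u + i ≤ M₂ → f₁ i = f₂ (u + i) := by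
  obtain ⟨⟨hp₁pos, hper₁⟩, hmin₁⟩ := hp₁
  obtain ⟨⟨hp₂pos, hper₂⟩, hmin₂⟩ := hp₂
  have hwin_symm : ∀ j : ℤ, u + v + 1 ≤ j → j ≤ u + v + p₂ + p₁ →
      (1 ≤ j ∧ j ≤ M₂) ∧ (1 ≤ -u + j ∧ -u + j ≤ M₁) ∧ f₂ j = f₁ (-u + j) := by
    intro j hj hj'
    obtain ⟨hi, huj, hfg⟩ := hwin (-u + j) (by linarith) (by linarith)
    rw [add_neg_cancel_left] at huj hfg
    exact ⟨huj, hi, hfg.symm⟩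
  have hp₁_per₂ := hper₁.of_eq_on_window hper₂ hp₁pos.le hp₂pos hwin
  have hp₂_per₁ := hper₂.of_eq_on_window hper₁ hp₂pos.le hp₁pos hwin_symm
  have hp : p₁ = p₂ := le_antisymm (hmin₁ ⟨hp₂pos, hp₂_per₁⟩) (hmin₂ ⟨hp₁pos, hp₁_per₂⟩)
  subst hp
  refine ⟨rfl, fun i hi hiM hui huiM => ?_⟩
  exact hper₁.eq_of_eq_on_window hper₂ hp₁pos (fun i hi hi' => hwin i hi (by linarith))
    hi hiM hui huiM

theorem stmt_0 {X : Type*} (M₁ M₂ : ℤ) (hM₁ : 0 < M₁) (hM₂ : 0 < M₂)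
    (f₁ f₂ : ℤ → X) (p₁ p₂ : ℤ)
    (hp₁ : IsLeast {p : ℤ | 0 < p ∧ IsPeriodicWith f₁ M₁ p} p₁)
    (hp₂ : IsLeast {p : ℤ | 0 < p ∧ IsPeriodicWith f₂ M₂ p} p₂)
    (u v : ℤ)
    (hwin : ∀ i : ℤ, v + 1 ≤ i → i ≤ v + p₁ + p₂ →
      (1 ≤ i ∧ i ≤ M₁) ∧ (1 ≤ u + i ∧ u + i ≤ M₂) ∧ f₁ i = f₂ (u + i)) :
    p₁ = p₂ ∧ ∀ i : ℤ, 1 ≤ i → i ≤ M₁ → 1 ≤ u + i → u + i ≤ M₂ → f₁ i = f₂ (u + i) :=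
  stmt_0_general M₁ M₂ f₁ f₂ p₁ p₂ hp₁ hp₂ u v hwin
end

section
/- Let Γ be a finite simple graph and let Γ_1, Γ_2 be induced subgraphs with Γ = Γ_1 ∪ Γ_2 and K = Γ_1 ∩ Γ_2 a complete subgraph. Then the set of maximal complete subgraphs satisfies: K(Γ_1) ∩ K(Γ_2) ⊆ {K} and K(Γ) ⊆ K(Γ_1) ∪ K(Γ_2) ⊆ K(Γ) ∪ {K}. -/
/-- `MaxCliqueIn G S K` : `K` is a maximal clique of the induced subgraph of `G` on `S`. -/
def MaxCliqueIn {V : Type*} (G : SimpleGraph V) (S : Set V) (K : Set V) : Prop :=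
  K ⊆ S ∧ G.IsClique K ∧ ∀ d : Set V, d ⊆ S → G.IsClique d → K ⊆ d → K = d

/-!
A clique of `Γ = Γ₁ ∪ Γ₂` cannot contain a vertex of `Γ₁ \ Γ₂` together with one of `Γ₂ \ Γ₁`,
since no edge joins them; so every clique lies in `Γ₁` or in `Γ₂`. Hence a maximal clique of `Γ`
is maximal in the side containing it. Conversely, a maximal clique of `Γ₁` that is not maximal in
`Γ` is contained in a larger clique, necessarily lying in `Γ₂`; then it lies in `K = Γ₁ ∩ Γ₂`,
and since `K` is itself a clique of `Γ₁`, maximality forces it to be `K`.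
-/

namespace SimpleGraph

variable {V : Type*} {G : SimpleGraph V} {S₁ S₂ : Set V}

theorem IsClique.subset_or_subset_of_cover (hcover : S₁ ∪ S₂ = Set.univ)
    (hedges : ∀ u v : V, G.Adj u v → (u ∈ S₁ ∧ v ∈ S₁) ∨ (u ∈ S₂ ∧ v ∈ S₂))
    {d : Set V} (hd : G.IsClique d) : d ⊆ S₁ ∨ d ⊆ S₂ := by
  by_contra! h
  obtain ⟨x, hxd, hx₁⟩ := Set.not_subset.mp h.1
  obtain ⟨y, hyd, hy₂⟩ := Set.not_subset.mp h.2
  have hx₂ : x ∈ S₂ := (hcover ▸ Set.mem_univ x : x ∈ S₁ ∪ S₂).resolve_left hx₁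
  have hy₁ : y ∈ S₁ := (hcover ▸ Set.mem_univ y : y ∈ S₁ ∪ S₂).resolve_right hy₂
  have hxy : x ≠ y := by rintro rfl; exact hx₁ hy₁
  exact (hedges x y (hd hxd hyd hxy)).elim (fun h => hx₁ h.1) (fun h => hy₂ h.2)

end SimpleGraph

namespace MaxCliqueIn

variable {V : Type*} {G : SimpleGraph V} {S₁ S₂ K : Set V}

theorem of_subset {S T : Set V} (hK : MaxCliqueIn G T K) (hKS : K ⊆ S)
    (hST : S ⊆ T) : MaxCliqueIn G S K :=
  ⟨hKS, hK.2.1, fun d hdS hd hKd => hK.2.2 d (hdS.trans hST) hd hKd⟩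

theorem eq_inter (hK : MaxCliqueIn G S₁ K) (hK₂ : K ⊆ S₂)
    (hinter : G.IsClique (S₁ ∩ S₂)) : K = S₁ ∩ S₂ :=
  hK.2.2 _ Set.inter_subset_left hinter (Set.subset_inter hK.1 hK₂)

theorem univ_or_eq_inter (hcover : S₁ ∪ S₂ = Set.univ)
    (hedges : ∀ u v : V, G.Adj u v → (u ∈ S₁ ∧ v ∈ S₁) ∨ (u ∈ S₂ ∧ v ∈ S₂))
    (hinter : G.IsClique (S₁ ∩ S₂)) (hK : MaxCliqueIn G S₁ K) :
    MaxCliqueIn G Set.univ K ∨ K = S₁ ∩ S₂ := by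
  by_cases hK₂ : K ⊆ S₂
  · exact Or.inr (hK.eq_inter hK₂ hinter)
  refine Or.inl ⟨Set.subset_univ K, hK.2.1, fun d _ hd hKd => ?_⟩
  rcases hd.subset_or_subset_of_cover hcover hedges with hd₁ | hd₂
  · exact hK.2.2 d hd₁ hd hKd
  · exact absurd (hKd.trans hd₂) hK₂

end MaxCliqueIn

theorem stmt_7_general {V : Type*} (G : SimpleGraph V) (S₁ S₂ : Set V)
    (hcover : S₁ ∪ S₂ = Set.univ)
    (hedges : ∀ u v : V, G.Adj u v → (u ∈ S₁ ∧ v ∈ S₁) ∨ (u ∈ S₂ ∧ v ∈ S₂))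
    (hK : G.IsClique (S₁ ∩ S₂)) :
    ({K | MaxCliqueIn G S₁ K} ∩ {K | MaxCliqueIn G S₂ K} ⊆ {S₁ ∩ S₂}) ∧
    ({K | MaxCliqueIn G Set.univ K} ⊆ {K | MaxCliqueIn G S₁ K} ∪ {K | MaxCliqueIn G S₂ K}) ∧
    ({K | MaxCliqueIn G S₁ K} ∪ {K | MaxCliqueIn G S₂ K}
      ⊆ {K | MaxCliqueIn G Set.univ K} ∪ {S₁ ∩ S₂}) := by
  have hcover' : S₂ ∪ S₁ = Set.univ := Set.union_comm S₁ S₂ ▸ hcover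
  have hedges' : ∀ u v : V, G.Adj u v → (u ∈ S₂ ∧ v ∈ S₂) ∨ (u ∈ S₁ ∧ v ∈ S₁) :=
    fun u v huv => (hedges u v huv).symm
  have hK' : G.IsClique (S₂ ∩ S₁) := Set.inter_comm S₁ S₂ ▸ hK
  refine ⟨fun K ⟨hK₁, hK₂⟩ => hK₁.eq_inter hK₂.1 hK, fun K hKmax => ?_, ?_⟩
  · rcases hKmax.2.1.subset_or_subset_of_cover hcover hedges with h₁ | h₂
    · exact Or.inl (hKmax.of_subset h₁ (Set.subset_univ S₁))
    · exact Or.inr (hKmax.of_subset h₂ (Set.subset_univ S₂))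
  · rintro K (hK₁ | hK₂)
    · exact hK₁.univ_or_eq_inter hcover hedges hK
    · have h := hK₂.univ_or_eq_inter hcover' hedges' hK'
      rwa [Set.inter_comm S₂ S₁] at h

theorem stmt_7 {V : Type*} [Fintype V] (G : SimpleGraph V) (S₁ S₂ : Set V)
    (hcover : S₁ ∪ S₂ = Set.univ)
    (hedges : ∀ u v : V, G.Adj u v → (u ∈ S₁ ∧ v ∈ S₁) ∨ (u ∈ S₂ ∧ v ∈ S₂))
    (hK : G.IsClique (S₁ ∩ S₂)) :
    ({K | MaxCliqueIn G S₁ K} ∩ {K | MaxCliqueIn G S₂ K} ⊆ {S₁ ∩ S₂}) ∧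
    ({K | MaxCliqueIn G Set.univ K} ⊆ {K | MaxCliqueIn G S₁ K} ∪ {K | MaxCliqueIn G S₂ K}) ∧
    ({K | MaxCliqueIn G S₁ K} ∪ {K | MaxCliqueIn G S₂ K}
      ⊆ {K | MaxCliqueIn G Set.univ K} ∪ {S₁ ∩ S₂}) :=
  stmt_7_general G S₁ S₂ hcover hedges hK
end

section
/- If a finite simple graph Γ is a complete graph amalgamation of Γ_1 and Γ_2 with K = Γ_1 ∩ Γ_2 not a maximal clique of Γ_1 nor of Γ_2, then the set of maximal cliques of Γ is the disjoint union of the sets of maximal cliques of Γ_1 and of Γ_2. -/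
theorem SimpleGraph.IsClique.subset_or_subset_of_union_eq_univ {V : Type*} {G : SimpleGraph V}
    {S₁ S₂ C : Set V} (hcover : S₁ ∪ S₂ = Set.univ)
    (hedges : ∀ u v : V, G.Adj u v → (u ∈ S₁ ∧ v ∈ S₁) ∨ (u ∈ S₂ ∧ v ∈ S₂))
    (hC : G.IsClique C) : C ⊆ S₁ ∨ C ⊆ S₂ := by
  by_contra! h
  obtain ⟨u, hu, hu₁⟩ := Set.not_subset.mp h.1
  obtain ⟨v, hv, hv₂⟩ := Set.not_subset.mp h.2
  have hu₂ : u ∈ S₂ := ((hcover ▸ Set.mem_univ u : u ∈ S₁ ∪ S₂)).resolve_left hu₁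
  have hv₁ : v ∈ S₁ := ((hcover ▸ Set.mem_univ v : v ∈ S₁ ∪ S₂)).resolve_right hv₂
  have huv : u ≠ v := fun e => hu₁ (e ▸ hv₁)
  rcases hedges u v (hC hu hv huv) with ⟨hu₁', -⟩ | ⟨-, hv₂'⟩
  · exact hu₁ hu₁'
  · exact hv₂ hv₂'

namespace MaxCliqueIn

variable {V : Type*} {G : SimpleGraph V} {S T K : Set V}

theorem of_univ (h : MaxCliqueIn G Set.univ K) (hKS : K ⊆ S) : MaxCliqueIn G S K :=
  ⟨hKS, h.2.1, fun d _ hd hKd => h.2.2 d (Set.subset_univ d) hd hKd⟩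

theorem not_subset_of_not_inter (h : MaxCliqueIn G S K) (hI : G.IsClique (S ∩ T))
    (hnot : ¬ MaxCliqueIn G S (S ∩ T)) : ¬ K ⊆ T := fun hKT =>
  hnot (h.2.2 (S ∩ T) Set.inter_subset_left hI (Set.subset_inter h.1 hKT) ▸ h)

theorem univ_of_not_subset (h : MaxCliqueIn G S K)
    (hsplit : ∀ C : Set V, G.IsClique C → C ⊆ S ∨ C ⊆ T) (hKT : ¬ K ⊆ T) :
    MaxCliqueIn G Set.univ K := by
  refine ⟨Set.subset_univ K, h.2.1, fun d _ hd hKd => ?_⟩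
  rcases hsplit d hd with hdS | hdT
  · exact h.2.2 d hdS hd hKd
  · exact absurd (hKd.trans hdT) hKT

end MaxCliqueIn

theorem stmt_8_general {V : Type*} (G : SimpleGraph V) (S₁ S₂ : Set V)
    (hcover : S₁ ∪ S₂ = Set.univ)
    (hedges : ∀ u v : V, G.Adj u v → (u ∈ S₁ ∧ v ∈ S₁) ∨ (u ∈ S₂ ∧ v ∈ S₂))
    (hK : G.IsClique (S₁ ∩ S₂))
    (hK₁ : ¬ MaxCliqueIn G S₁ (S₁ ∩ S₂))
    (hK₂ : ¬ MaxCliqueIn G S₂ (S₁ ∩ S₂)) :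
    {K | MaxCliqueIn G Set.univ K} = {K | MaxCliqueIn G S₁ K} ∪ {K | MaxCliqueIn G S₂ K} ∧
    {K | MaxCliqueIn G S₁ K} ∩ {K | MaxCliqueIn G S₂ K} = ∅ := by
  have hsplit₁ (C : Set V) (hC : G.IsClique C) : C ⊆ S₁ ∨ C ⊆ S₂ :=
    hC.subset_or_subset_of_union_eq_univ hcover hedges
  have hsplit₂ (C : Set V) (hC : G.IsClique C) : C ⊆ S₂ ∨ C ⊆ S₁ := (hsplit₁ C hC).symm
  rw [Set.inter_comm] at hK₂
  have not_sub₁ {K : Set V} (h : MaxCliqueIn G S₁ K) : ¬ K ⊆ S₂ :=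
    h.not_subset_of_not_inter hK hK₁
  have not_sub₂ {K : Set V} (h : MaxCliqueIn G S₂ K) : ¬ K ⊆ S₁ :=
    h.not_subset_of_not_inter (Set.inter_comm S₁ S₂ ▸ hK) hK₂
  refine ⟨Set.ext fun K => ⟨fun h => ?_, fun h => ?_⟩, ?_⟩
  · exact (hsplit₁ K h.2.1).imp h.of_univ h.of_univ
  · rcases h with h | h
    · exact h.univ_of_not_subset hsplit₁ (not_sub₁ h)
    · exact h.univ_of_not_subset hsplit₂ (not_sub₂ h)
  · exact Set.eq_empty_iff_forall_notMem.mpr fun K ⟨h₁, h₂⟩ => not_sub₁ h₁ h₂.1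

theorem stmt_8 {V : Type*} [Fintype V] (G : SimpleGraph V) (S₁ S₂ : Set V)
    (hcover : S₁ ∪ S₂ = Set.univ)
    (hedges : ∀ u v : V, G.Adj u v → (u ∈ S₁ ∧ v ∈ S₁) ∨ (u ∈ S₂ ∧ v ∈ S₂))
    (hK : G.IsClique (S₁ ∩ S₂))
    (hK₁ : ¬ MaxCliqueIn G S₁ (S₁ ∩ S₂))
    (hK₂ : ¬ MaxCliqueIn G S₂ (S₁ ∩ S₂)) :
    {K | MaxCliqueIn G Set.univ K} = {K | MaxCliqueIn G S₁ K} ∪ {K | MaxCliqueIn G S₂ K} ∧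
    {K | MaxCliqueIn G S₁ K} ∩ {K | MaxCliqueIn G S₂ K} = ∅ :=
  stmt_8_general G S₁ S₂ hcover hedges hK hK₁ hK₂
end

section
/- Every finite chordal graph is either complete or can be written as the union of two proper induced subgraphs whose intersection is a complete graph (possibly empty). -/
/-- A simple graph is chordal if it has no induced cycle of length at least 4. -/
def IsChordal {V : Type*} (G : SimpleGraph V) : Prop :=
  ∀ n : ℕ, 4 ≤ n → ∀ f : Fin n ↪ V,
    ¬ (∀ i j : Fin n, G.Adj (f i) (f j) ↔ (SimpleGraph.cycleGraph n).Adj i j)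

/-!
Two non-adjacent vertices `a`, `b` are separated by the neighbourhood of `a`, so `G` has
separations `V = A ⊔ C ⊔ B` without edges between `A` and `B`; take one with `C` minimal under
inclusion. By minimality every `z ∈ C` has a neighbour in each part of `A` that is closed under
adjacency inside `A`, so any two `x, y ∈ C` are joined by a path through `A` and by one through `B`.
If `x`, `y` were non-adjacent, shortest such paths would be induced and would close up to an
induced cycle of length at least 4. So `C` is a clique, and `A ∪ C`, `B ∪ C` is the amalgamation.
-/

namespace SimpleGraph

variable {V : Type*} {G : SimpleGraph V}

def IsInducedPath (G : SimpleGraph V) (f : ℕ → V) (m : ℕ) : Prop :=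
  ∀ i j, i < j → j ≤ m → f i ≠ f j ∧ (G.Adj (f i) (f j) ↔ j = i + 1)

def IsInducedCycle (G : SimpleGraph V) (c : ℕ → V) (n : ℕ) : Prop :=
  ∀ i j, i < j → j < n → c i ≠ c j ∧ (G.Adj (c i) (c j) ↔ j = i + 1 ∨ i = 0 ∧ j = n - 1)

theorem cycleGraph_adj_iff_of_lt {n : ℕ} {i j : Fin n} (hij : i < j) :
    (cycleGraph n).Adj i j ↔ j.val = i.val + 1 ∨ i.val = 0 ∧ j.val = n - 1 := by
  rw [cycleGraph_adj', Fin.coe_sub_iff_lt.2 hij, Fin.sub_val_of_le hij.le]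
  have := j.isLt
  rw [Fin.lt_def] at hij
  omega

theorem _root_.IsChordal.lt_four_of_isInducedCycle (hG : IsChordal G) {c : ℕ → V} {n : ℕ}
    (hc : G.IsInducedCycle c n) : n < 4 := by
  by_contra! hn
  have hinj : Function.Injective fun k : Fin n => c k := fun i j hij => by
    by_contra hne
    rcases Fin.lt_or_lt_of_ne hne with h | h
    · exact (hc i j h j.isLt).1 hij
    · exact (hc j i h i.isLt).1 hij.symm
  refine hG n hn ⟨_, hinj⟩ fun i j => ?_
  rcases lt_trichotomy i j with h | rfl | h
  · rw [cycleGraph_adj_iff_of_lt h]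
    exact (hc i j h j.isLt).2
  · simp
  · rw [G.adj_comm, (cycleGraph n).adj_comm, cycleGraph_adj_iff_of_lt h]
    exact (hc j i h i.isLt).2

theorem IsInducedPath.isInducedCycle_glue {f g : ℕ → V} {m l : ℕ} (hf : G.IsInducedPath f m)
    (hg : G.IsInducedPath g l) (hm : 2 ≤ m) (hl : 2 ≤ l) (h0 : f 0 = g 0) (hend : f m = g l)
    (hfg : ∀ i j, 0 < i → i < m → 0 < j → j < l → f i ≠ g j ∧ ¬G.Adj (f i) (g j)) :
    G.IsInducedCycle (fun k => if k < m then f k else g (m + l - k)) (m + l) := by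
  intro i j hij hj
  by_cases hjm : j < m
  · simp only [if_pos hjm, if_pos (hij.trans hjm)]
    obtain ⟨hne, hadj⟩ := hf i j hij hjm.le
    exact ⟨hne, hadj.trans (by omega)⟩
  by_cases him : m ≤ i
  · simp only [if_neg hjm, if_neg (not_lt.2 him)]
    obtain ⟨hne, hadj⟩ := hg (m + l - j) (m + l - i) (by omega) (by omega)
    exact ⟨hne.symm, G.adj_comm _ _ |>.trans <| hadj.trans (by omega)⟩
  simp only [if_neg hjm, if_pos (not_le.1 him)]
  rcases Nat.eq_zero_or_pos i with rfl | hi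
  · obtain ⟨hne, hadj⟩ := hg 0 (m + l - j) (by omega) (by omega)
    rw [h0]
    exact ⟨hne, hadj.trans (by omega)⟩
  rcases eq_or_lt_of_le (not_lt.1 hjm) with rfl | hj'
  · rw [Nat.add_sub_cancel_left, ← hend]
    obtain ⟨hne, hadj⟩ := hf i m (by omega) le_rfl
    exact ⟨hne, hadj.trans (by omega)⟩
  · obtain ⟨hne, hnadj⟩ := hfg i (m + l - j) hi (by omega) (by omega) (by omega)
    exact ⟨hne, iff_of_false hnadj (by omega)⟩

theorem Walk.isInducedPath_getVert {u v : V} (p : G.Walk u v) (hp : p.length = G.dist u v) :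
    G.IsInducedPath p.getVert p.length := by
  intro i j hij hj
  refine ⟨fun he => ?_, fun hadj => ?_, ?_⟩
  · have := (p.isPath_of_length_eq_dist hp).getVert_injOn (by simp; omega) (by simp; omega) he
    omega
  · by_contra hne
    -- the chord shortcuts `p`
    have := dist_le ((p.take i).append (cons hadj (p.drop j)))
    simp only [length_append, length_cons, take_length, drop_length] at this
    omega
  · rintro rfl
    exact p.adj_getVert_succ (by omega)

theorem spanningCoe_induce_adj {s : Set V} {u v : V} :
    (G.induce s).spanningCoe.Adj u v ↔ G.Adj u v ∧ u ∈ s ∧ v ∈ s := by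
  simp

theorem Walk.getVert_mem_of_spanningCoe_induce {s : Set V} {u v : V}
    (p : (G.induce s).spanningCoe.Walk u v) (hu : u ∈ s) (i : ℕ) : p.getVert i ∈ s := by
  induction p generalizing i with
  | nil => simpa using hu
  | cons h p ih =>
    cases i with
    | zero => simpa using hu
    | succ i => simpa using ih (spanningCoe_induce_adj.1 h).2.2 i

theorem Reachable.exists_isInducedPath {S : Set V} {u v : V}
    (h : (G.induce (insert u (insert v S))).spanningCoe.Reachable u v) (hne : u ≠ v)
    (hnadj : ¬G.Adj u v) :
    ∃ f m, 2 ≤ m ∧ f 0 = u ∧ f m = v ∧ G.IsInducedPath f m ∧ ∀ i, 0 < i → i < m → f i ∈ S := by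
  obtain ⟨p, hp⟩ := h.exists_walk_length_eq_dist
  have hmem := p.getVert_mem_of_spanningCoe_induce (Set.mem_insert u _)
  have hpath := p.isInducedPath_getVert hp
  refine ⟨p.getVert, p.length, ?_, p.getVert_zero, p.getVert_length, fun i j hij hj => ?_,
    fun i hi0 hi => ?_⟩
  · exact hp ▸ h.one_lt_dist_of_ne_of_not_adj hne fun h' => hnadj (spanningCoe_induce_adj.1 h').1
  · obtain ⟨hne, hadj⟩ := hpath i j hij hj
    rw [spanningCoe_induce_adj, and_iff_left ⟨hmem i, hmem j⟩] at hadj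
    exact ⟨hne, hadj⟩
  · have hu := (hpath 0 i hi0 hi.le).1
    have hv := (hpath i p.length hi le_rfl).1
    simp only [Walk.getVert_zero, Walk.getVert_length] at hu hv
    simpa [hu.symm, hv] using hmem i

structure IsSeparation (G : SimpleGraph V) (A C : Set V) : Prop where
  nonempty : A.Nonempty
  disjoint : Disjoint A C
  nonempty_compl : (A ∪ C)ᶜ.Nonempty
  mem_of_adj ⦃u v : V⦄ : u ∈ A → G.Adj u v → v ∈ A ∪ C

def IsMinimalSeparator (G : SimpleGraph V) (C : Set V) : Prop :=
  Minimal (fun C => ∃ A, G.IsSeparation A C) C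

theorem isSeparation_singleton_neighborSet {a b : V} (hab : a ≠ b) (hnadj : ¬G.Adj a b) :
    G.IsSeparation {a} (G.neighborSet a) where
  nonempty := Set.singleton_nonempty a
  disjoint := by simp
  nonempty_compl := ⟨b, by simp [hab.symm, hnadj]⟩
  mem_of_adj u v hu huv := by
    rw [Set.mem_singleton_iff.1 hu] at huv
    exact Or.inr huv

theorem IsSeparation.symm {A C : Set V} (h : G.IsSeparation A C) : G.IsSeparation (A ∪ C)ᶜ C where
  nonempty := h.nonempty_compl
  disjoint := disjoint_compl_left.mono_right Set.subset_union_right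
  nonempty_compl := by
    obtain ⟨a, ha⟩ := h.nonempty
    exact ⟨a, by simp [ha, h.disjoint.notMem_of_mem_left ha]⟩
  mem_of_adj u v hu huv := by
    by_cases hv : v ∈ A
    · exact absurd (h.mem_of_adj hv huv.symm) hu
    by_cases hvC : v ∈ C
    · exact Or.inr hvC
    · exact Or.inl fun hv' => hv'.elim hv hvC

theorem IsMinimalSeparator.exists_adj {A C A₀ : Set V} (hC : G.IsMinimalSeparator C)
    (h : G.IsSeparation A C) {z : V} (hz : z ∈ C)
    (hA₀ : A₀ ⊆ A) (hne : A₀.Nonempty) (hclosed : ∀ ⦃u v⦄, u ∈ A₀ → v ∈ A → G.Adj u v → v ∈ A₀) :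
    ∃ u ∈ A₀, G.Adj u z := by
  by_contra! hno
  -- otherwise `C \ {z}` already separates `A₀` from the rest
  refine hC.not_prop_of_lt (Set.sdiff_singleton_ssubset.2 hz) ⟨A₀, hne, ?_, ?_, ?_⟩
  · exact (h.disjoint.mono_left hA₀).mono_right Set.sdiff_subset
  · exact h.nonempty_compl.mono <| Set.compl_subset_compl.2 <|
      Set.union_subset_union hA₀ Set.sdiff_subset
  · intro u v hu huv
    rcases h.mem_of_adj (hA₀ hu) huv with hv | hv
    · exact Or.inl (hclosed hu hv huv)
    · exact Or.inr ⟨hv, fun hvz => hno u hu (hvz ▸ huv)⟩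

theorem IsMinimalSeparator.reachable {A C : Set V} (hC : G.IsMinimalSeparator C)
    (h : G.IsSeparation A C) {x y : V} (hx : x ∈ C) (hy : y ∈ C) :
    (G.induce (insert x (insert y A))).spanningCoe.Reachable x y := by
  set H := (G.induce (insert x (insert y A))).spanningCoe
  have hH : ∀ ⦃u v⦄, G.Adj u v → u ∈ insert x (insert y A) → v ∈ insert x (insert y A) →
      H.Adj u v := fun u v huv hu hv => spanningCoe_induce_adj.2 ⟨huv, hu, hv⟩
  obtain ⟨u, hu, hux⟩ := hC.exists_adj h hx subset_rfl h.nonempty fun _ v _ hv _ => hv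
  obtain ⟨w, ⟨hwA, hxw⟩, hwy⟩ := hC.exists_adj (A₀ := {v ∈ A | H.Reachable x v}) h hy
    (fun _ hv => hv.1) ⟨u, hu, (hH hux.symm (by simp) (by simp [hu])).reachable⟩
    fun v w hv hw hvw => ⟨hw, hv.2.trans (hH hvw (by simp [hv.1]) (by simp [hw])).reachable⟩
  exact hxw.trans (hH hwy (by simp [hwA]) (by simp)).reachable

theorem _root_.IsChordal.isClique_of_isMinimalSeparator (hG : IsChordal G) {C : Set V}
    (hC : G.IsMinimalSeparator C) : G.IsClique C := by
  obtain ⟨A, h⟩ := hC.prop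
  intro x hx y hy hxy
  by_contra hnadj
  obtain ⟨f, m, hm, hf0, hfm, hf, hfA⟩ := (hC.reachable h hx hy).exists_isInducedPath hxy hnadj
  obtain ⟨g, l, hl, hg0, hgl, hg, hgB⟩ := (hC.reachable h.symm hx hy).exists_isInducedPath hxy hnadj
  have hcycle := hf.isInducedCycle_glue hg hm hl (hf0.trans hg0.symm) (hfm.trans hgl.symm)
    fun i j hi him hj hjl => by
      have hgj := hgB j hj hjl
      exact ⟨fun he => hgj (Or.inl (he ▸ hfA i hi him)),
        fun hadj => hgj (h.mem_of_adj (hfA i hi him) hadj)⟩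
  have := hG.lt_four_of_isInducedCycle hcycle
  omega

theorem IsSeparation.exists_amalgamation {A C : Set V} (h : G.IsSeparation A C)
    (hC : G.IsClique C) :
    ∃ S₁ S₂ : Set V, S₁ ≠ Set.univ ∧ S₂ ≠ Set.univ ∧ S₁ ∪ S₂ = Set.univ ∧
      G.IsClique (S₁ ∩ S₂) ∧ ∀ u v : V, G.Adj u v → (u ∈ S₁ ∧ v ∈ S₁) ∨ (u ∈ S₂ ∧ v ∈ S₂) := by
  refine ⟨A ∪ C, Aᶜ, Set.nonempty_compl.1 h.nonempty_compl, ?_, ?_,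
    hC.subset fun v hv => hv.1.resolve_left hv.2, fun u v huv => ?_⟩
  · exact fun hA => h.nonempty.ne_empty (Set.compl_univ_iff.1 hA)
  · exact Set.eq_univ_of_forall fun v => (em (v ∈ A)).imp Or.inl id
  by_cases hu : u ∈ A
  · exact Or.inl ⟨Or.inl hu, h.mem_of_adj hu huv⟩
  by_cases hv : v ∈ A
  · exact Or.inl ⟨h.mem_of_adj hv huv.symm, Or.inl hv⟩
  · exact Or.inr ⟨hu, hv⟩

end SimpleGraph

open SimpleGraph

theorem stmt_12 {V : Type*} [Fintype V] (G : SimpleGraph V) (h : IsChordal G) :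
    G.IsClique Set.univ ∨
    ∃ S₁ S₂ : Set V, S₁ ≠ Set.univ ∧ S₂ ≠ Set.univ ∧ S₁ ∪ S₂ = Set.univ ∧
      G.IsClique (S₁ ∩ S₂) ∧
      ∀ u v : V, G.Adj u v → (u ∈ S₁ ∧ v ∈ S₁) ∨ (u ∈ S₂ ∧ v ∈ S₂) := by
  by_cases hcl : G.IsClique Set.univ
  · exact Or.inl hcl
  obtain ⟨a, -, b, -, hab, hnadj⟩ : ∃ a ∈ Set.univ, ∃ b ∈ Set.univ, a ≠ b ∧ ¬G.Adj a b := by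
    simpa [IsClique, Set.Pairwise] using hcl
  obtain ⟨C, -, hC⟩ := exists_minimal_le_of_wellFoundedLT (fun C => ∃ A, G.IsSeparation A C) _
    ⟨{a}, isSeparation_singleton_neighborSet hab hnadj⟩
  obtain ⟨A, hA⟩ := hC.prop
  exact Or.inr (hA.exists_amalgamation (h.isClique_of_isMinimalSeparator hC))
end

section
/- Every finite chordal graph with at least one vertex has a simplicial vertex, i.e., a vertex whose neighborhood induces a complete subgraph. -/
namespace SimpleGraph

variable {V : Type*} {G : SimpleGraph V}

lemma cycleGraph_adj_castSucc {n : ℕ} {i j : Fin n} :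
    (cycleGraph (n + 1)).Adj i.castSucc j.castSucc ↔ (pathGraph n).Adj i j := by
  have hsub : ∀ u v : Fin n, ((u.castSucc - v.castSucc : Fin (n + 1)) : ℕ) =
      if v ≤ u then u.val - v.val else n + 1 + u.val - v.val := by
    intro u v
    split_ifs with h
    · simpa using Fin.sub_val_of_le (Fin.castSucc_le_castSucc_iff.2 h)
    · simpa using Fin.coe_sub_iff_lt.2 (Fin.castSucc_lt_castSucc_iff.2 (not_le.1 h))
  rw [cycleGraph_adj', pathGraph_adj, hsub, hsub]
  have := i.isLt
  have := j.isLt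
  split_ifs <;> simp only [Fin.le_def] at * <;> omega

lemma cycleGraph_adj_last_castSucc {n : ℕ} {j : Fin n} :
    (cycleGraph (n + 1)).Adj (Fin.last n) j.castSucc ↔ j.val = 0 ∨ j.val + 1 = n := by
  rw [cycleGraph_adj', Fin.sub_val_of_le (Fin.le_last _),
    Fin.coe_sub_iff_lt.2 (Fin.castSucc_lt_last j)]
  simp only [Fin.val_last, Fin.val_castSucc]
  have := j.isLt
  omega

namespace Walk

variable {u v : V}

lemma dist_getVert_of_length_eq_dist (p : G.Walk u v) (hp : p.length = G.dist u v) {i : ℕ}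
    (hi : i ≤ p.length) : G.dist u (p.getVert i) = i := by
  have htake := dist_le (p.take i)
  have hdrop := dist_le (p.drop i)
  have htri := (p.drop i).reachable.dist_triangle_right u
  rw [take_length, min_eq_left hi] at htake
  rw [drop_length] at hdrop
  omega

def toPathGraphEmbedding (p : G.Walk u v) (hp : p.length = G.dist u v) :
    pathGraph (p.length + 1) ↪g G where
  toFun i := p.getVert i
  inj' i j hij := Fin.ext <| by
    have hi := p.dist_getVert_of_length_eq_dist hp (Nat.le_of_lt_succ i.isLt)
    have hj := p.dist_getVert_of_length_eq_dist hp (Nat.le_of_lt_succ j.isLt)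
    simp only at hij
    rw [← hi, ← hj, hij]
  map_rel_iff' {i j} := by
    have hi := p.dist_getVert_of_length_eq_dist hp (Nat.le_of_lt_succ i.isLt)
    have hj := p.dist_getVert_of_length_eq_dist hp (Nat.le_of_lt_succ j.isLt)
    change G.Adj (p.getVert i) (p.getVert j) ↔ _
    rw [pathGraph_adj]
    constructor
    · intro hadj
      have hne : i.val ≠ j.val := fun h => G.irrefl (h ▸ hadj)
      rcases hadj.diff_dist_adj (u := u) with h | h | h <;> omega
    · rintro (h | h)
      · exact h ▸ p.adj_getVert_succ (by omega)
      · exact (h ▸ p.adj_getVert_succ (by omega)).symm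

lemma toPathGraphEmbedding_apply (p : G.Walk u v) (hp : p.length = G.dist u v)
    (i : Fin (p.length + 1)) : p.toPathGraphEmbedding hp i = p.getVert i := rfl

end Walk

def IsSimplicial (G : SimpleGraph V) (v : V) : Prop :=
  G.IsClique (G.neighborSet v)

lemma IsSimplicial.of_induce {s : Set V} {v : s} (hv : G.neighborSet v ⊆ s)
    (h : (G.induce s).IsSimplicial v) : G.IsSimplicial v := by
  intro x hx y hy hxy
  exact h (x := ⟨x, hv hx⟩) hx (y := ⟨y, hv hy⟩) hy (by simpa using hxy)

lemma exists_isSimplicial_mem {S C : Set V} {c : V} (hS : G.IsClique S) (hc : c ∈ C)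
    (hC : ∀ v ∈ C, G.neighborSet v ⊆ C ∪ S)
    (hCS : ∀ x y : ↥(C ∪ S), x ≠ y → ¬(G.induce (C ∪ S)).Adj x y → ∃ u v, u ≠ v ∧
      ¬(G.induce (C ∪ S)).Adj u v ∧ (G.induce (C ∪ S)).IsSimplicial u ∧
        (G.induce (C ∪ S)).IsSimplicial v) :
    ∃ v ∈ C, G.IsSimplicial v := by
  by_cases hclique : G.IsClique (C ∪ S)
  · exact ⟨c, hc, hclique.subset (hC c hc)⟩
  obtain ⟨x, hx, y, hy, hxy, hnxy⟩ : ∃ x ∈ C ∪ S, ∃ y ∈ C ∪ S, x ≠ y ∧ ¬G.Adj x y := by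
    simpa [IsClique, Set.Pairwise] using hclique
  obtain ⟨u, v, huv, hnuv, hu, hv⟩ := hCS ⟨x, hx⟩ ⟨y, hy⟩ (by simpa) hnxy
  by_cases huC : u.val ∈ C
  · exact ⟨u, huC, hu.of_induce (hC u huC)⟩
  by_cases hvC : v.val ∈ C
  · exact ⟨v, hvC, hv.of_induce (hC v hvC)⟩
  exact absurd (hS (u.2.resolve_left huC) (v.2.resolve_left hvC) (Subtype.val_injective.ne huv))
    hnuv

end SimpleGraph

open SimpleGraph

namespace IsChordal

variable {V : Type*} {G : SimpleGraph V}

theorem of_embedding {W : Type*} {H : SimpleGraph W} (f : H ↪g G) (hG : IsChordal G) :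
    IsChordal H := fun n hn e he =>
  hG n hn (e.trans f.toEmbedding) fun i j => by simpa [f.map_adj_iff] using he i j

theorem not_forall_adj_iff_ends (hG : IsChordal G) {n : ℕ} (hn : 3 ≤ n)
    (f : pathGraph n ↪g G) {a : V} (ha : a ∉ Set.range f) :
    ¬ ∀ i, G.Adj a (f i) ↔ i.val = 0 ∨ i.val + 1 = n := by
  intro hends
  refine hG (n + 1) (by omega) (Fin.Embedding.snoc f.toEmbedding ha) fun i j => ?_
  induction i using Fin.lastCases <;> induction j using Fin.lastCases <;>
    simp only [Fin.Embedding.snoc_castSucc, Fin.Embedding.snoc_last, RelEmbedding.coe_toEmbedding,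
      cycleGraph_adj_castSucc, cycleGraph_adj_last_castSucc, f.map_adj_iff, hends, G.irrefl,
      (cycleGraph _).irrefl]
  rw [G.adj_comm, (cycleGraph _).adj_comm, hends, cycleGraph_adj_last_castSucc]

theorem adj_of_walk_outside_closedNeighborhood (hG : IsChordal G) {a z w : V}
    (hz : G.Adj a z) (hw : G.Adj a w) (hzw : z ≠ w) (p : G.Walk z w)
    (hp : ∀ x ∈ p.support, x = z ∨ x = w ∨ (x ≠ a ∧ ¬G.Adj a x)) : G.Adj z w := by
  by_contra hnadj
  set s : Set V := {x | x = z ∨ x = w ∨ (x ≠ a ∧ ¬G.Adj a x)}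
  have hr : (G.induce s).Reachable ⟨z, Or.inl rfl⟩ ⟨w, Or.inr (Or.inl rfl)⟩ := ⟨p.induce s hp⟩
  obtain ⟨q, hq⟩ := hr.exists_walk_length_eq_dist
  have h2 : 1 < q.length :=
    hq ▸ hr.one_lt_dist_of_ne_of_not_adj (by simpa using hzw) (by simpa using hnadj)
  set f := (Embedding.induce s).comp (q.toPathGraphEmbedding hq)
  have hf0 : f ⟨0, by omega⟩ = z := by simp [f, Walk.toPathGraphEmbedding_apply]
  have hflast : f ⟨q.length, by omega⟩ = w := by simp [f, Walk.toPathGraphEmbedding_apply]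
  have hfs : ∀ i, f i ∈ s := fun i => (q.getVert i).2
  refine hG.not_forall_adj_iff_ends (a := a) (by omega) f ?_ fun i => ⟨fun hai => ?_, ?_⟩
  · rintro ⟨i, hi⟩
    rcases hfs i with h | h | h
    · exact G.irrefl (hi ▸ h ▸ hz)
    · exact G.irrefl (hi ▸ h ▸ hw)
    · exact h.1 hi
  · rcases hfs i with h | h | h
    · exact Or.inl (congrArg Fin.val (f.injective (h.trans hf0.symm)))
    · exact Or.inr (by rw [f.injective (h.trans hflast.symm)])
    · exact (h.2 hai).elim
  · rintro (h | h)
    · rwa [show i = ⟨0, by omega⟩ from Fin.ext h, hf0]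
    · rwa [show i = ⟨q.length, by omega⟩ from Fin.ext (Nat.succ_inj.1 h), hflast]

theorem exists_isClique_separator (hG : IsChordal G) {a b : V} (hab : a ≠ b)
    (hnadj : ¬G.Adj a b) :
    ∃ B S : Set V, b ∈ B \ S ∧ a ∉ B ∪ S ∧ G.IsClique S ∧ ∀ v ∈ B, G.neighborSet v ⊆ B ∪ S := by
  set B : Set V := {v | ∃ p : G.Walk b v, ∀ x ∈ p.support, x ≠ a ∧ ¬G.Adj a x}
  set S : Set V := {z | G.Adj a z ∧ ∃ v ∈ B, G.Adj z v}
  have hB : ∀ v ∈ B, v ≠ a ∧ ¬G.Adj a v := fun v ⟨p, hp⟩ => hp v p.end_mem_support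
  refine ⟨B, S, ⟨⟨.nil, by simpa using ⟨hab.symm, hnadj⟩⟩, fun h => hnadj h.1⟩, ?_, ?_, ?_⟩
  · rintro (h | h)
    · exact (hB a h).1 rfl
    · exact G.irrefl h.1
  · rintro z ⟨haz, u, ⟨pu, hpu⟩, hzu⟩ w ⟨haw, u', ⟨pu', hpu'⟩, hwu'⟩ hzw
    refine hG.adj_of_walk_outside_closedNeighborhood haz haw hzw
      (.cons hzu ((pu.reverse.append pu').concat hwu'.symm)) fun x hx => ?_
    simp only [Walk.support_cons, Walk.support_concat, Walk.support_append, Walk.support_reverse,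
      List.mem_cons, List.mem_append, List.mem_reverse, List.not_mem_nil, or_false] at hx
    rcases hx with rfl | (hx | hx) | rfl
    · exact Or.inl rfl
    · exact Or.inr (Or.inr (hpu x hx))
    · exact Or.inr (Or.inr (hpu' x (List.mem_of_mem_tail hx)))
    · exact Or.inr (Or.inl rfl)
  · rintro v ⟨p, hp⟩ x (hvx : G.Adj v x)
    by_cases hx : x ≠ a ∧ ¬G.Adj a x
    · left
      refine ⟨p.concat hvx, fun y hy => ?_⟩
      rw [Walk.support_concat, List.mem_append, List.mem_singleton] at hy
      rcases hy with hy | rfl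
      exacts [hp y hy, hx]
    · right
      have hxa : x ≠ a := fun hxa => (hp v p.end_mem_support).2 (hxa ▸ hvx.symm)
      have hax : G.Adj a x := not_not.1 fun h => hx ⟨hxa, h⟩
      exact ⟨hax, v, ⟨p, hp⟩, hvx.symm⟩

theorem exists_isSimplicial_ne_not_adj [Finite V] (hG : IsChordal G) {a b : V} (hab : a ≠ b)
    (hnadj : ¬G.Adj a b) :
    ∃ u v, u ≠ v ∧ ¬G.Adj u v ∧ G.IsSimplicial u ∧ G.IsSimplicial v := by
  induction hn : Nat.card V using Nat.strong_induction_on generalizing V with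
  | _ n ih =>
  obtain ⟨B, S, ⟨hbB, hbS⟩, haBS, hS, hB⟩ := hG.exists_isClique_separator hab hnadj
  have side : ∀ C : Set V, ∀ c ∈ C, ∀ x ∉ C ∪ S, (∀ v ∈ C, G.neighborSet v ⊆ C ∪ S) →
      ∃ v ∈ C, G.IsSimplicial v := fun C c hc x hx hC =>
    exists_isSimplicial_mem hS hc hC fun y z hyz h =>
      ih _ (hn ▸ Finite.card_subtype_lt hx) (hG.of_embedding (Embedding.induce _)) hyz h rfl
  have hA : ∀ v ∈ (B ∪ S)ᶜ, G.neighborSet v ⊆ (B ∪ S)ᶜ ∪ S := by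
    intro v hv x hx
    have hxB : x ∉ B := fun hxB => hv (hB x hxB (G.adj_symm hx))
    simp only [Set.mem_union, Set.mem_compl_iff]
    tauto
  obtain ⟨u, huB, hu⟩ := side B b hbB a haBS hB
  obtain ⟨v, hvA, hv⟩ := side (B ∪ S)ᶜ a haBS b (by simp [hbB, hbS]) hA
  exact ⟨u, v, fun h => hvA (Or.inl (h ▸ huB)), fun h => hvA (hB u huB h), hu, hv⟩

end IsChordal

theorem stmt_13 {V : Type*} [Fintype V] [Nonempty V] (G : SimpleGraph V)
    (h : IsChordal G) :
    ∃ v : V, G.IsClique (G.neighborSet v) := by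
  by_cases hG : G.IsClique Set.univ
  · obtain ⟨v⟩ := ‹Nonempty V›
    exact ⟨v, hG.subset (Set.subset_univ _)⟩
  obtain ⟨a, -, b, -, hab, hnadj⟩ : ∃ a ∈ Set.univ, ∃ b ∈ Set.univ, a ≠ b ∧ ¬G.Adj a b := by
    simpa [IsClique, Set.Pairwise] using hG
  obtain ⟨u, -, -, -, hu, -⟩ := h.exists_isSimplicial_ne_not_adj hab hnadj
  exact ⟨u, hu⟩
end

section
/- Suppose a finite simple graph Γ is a complete graph amalgamation of induced subgraphs Γ_1 and Γ_2 with K = Γ_1 ∩ Γ_2, and suppose K is a maximal clique of neither Γ_1 nor Γ_2. Then the simplicial extension satisfies Γ* = Γ_1* ∪ Γ_2* with Γ_1* ∩ Γ_2* = K; i.e., Γ* is a complete graph amalgamation of Γ_1* and Γ_2*. -/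
/-- The simplicial extension of the induced subgraph of `G` on `S`, realized as a graph on
the common vertex type `V ⊕ (Set V × V)`: for each pair `(K, u)` with `K` a maximal clique
of the induced subgraph on `S` and `u ∈ K`, the vertex `Sum.inr (K, u)` is joined exactly
to the vertices of `K`. -/
def ExtGraph {V : Type*} (G : SimpleGraph V) (S : Set V) :
    SimpleGraph (V ⊕ (Set V × V)) where
  Adj x y := match x, y with
    | Sum.inl a, Sum.inl b => a ∈ S ∧ b ∈ S ∧ G.Adj a b
    | Sum.inl a, Sum.inr p => MaxCliqueIn G S p.1 ∧ p.2 ∈ p.1 ∧ a ∈ p.1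
    | Sum.inr p, Sum.inl a => MaxCliqueIn G S p.1 ∧ p.2 ∈ p.1 ∧ a ∈ p.1
    | Sum.inr _, Sum.inr _ => False
  symm := by
    constructor
    rintro (a | p) (b | q) h
    · exact ⟨h.2.1, h.1, h.2.2.symm⟩
    · exact h
    · exact h
    · exact h
  loopless := by
    constructor
    rintro (a | p) h
    · exact G.loopless.irrefl a h.2.2
    · exact h

/-- The vertex set of the simplicial extension of the induced subgraph of `G` on `S`. -/
def ExtVerts {V : Type*} (G : SimpleGraph V) (S : Set V) : Set (V ⊕ (Set V × V)) :=
  Sum.inl '' S ∪ Sum.inr '' {p : Set V × V | MaxCliqueIn G S p.1 ∧ p.2 ∈ p.1}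

namespace MaxCliqueIn

variable {V : Type*} {G : SimpleGraph V} {S T K : Set V}

theorem restrict (h : MaxCliqueIn G T K) (hKS : K ⊆ S) (hST : S ⊆ T) : MaxCliqueIn G S K :=
  ⟨hKS, h.2.1, fun d hdS => h.2.2 d (hdS.trans hST)⟩

theorem not_subset_of_not_maxCliqueIn (h : MaxCliqueIn G S K) (hTS : T ⊆ S)
    (hT : G.IsClique T) (hTmax : ¬ MaxCliqueIn G S T) : ¬ K ⊆ T :=
  fun hKT => hTmax (h.2.2 T hTS hT hKT ▸ h)

end MaxCliqueIn

section Amalgamation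

variable {V : Type*} {G : SimpleGraph V} {S₁ S₂ : Set V}

theorem SimpleGraph.IsClique.subset_or_subset_of_cover_s15 (hcover : S₁ ∪ S₂ = Set.univ)
    (hedges : ∀ u v : V, G.Adj u v → (u ∈ S₁ ∧ v ∈ S₁) ∨ (u ∈ S₂ ∧ v ∈ S₂)) {d : Set V}
    (hd : G.IsClique d) : d ⊆ S₁ ∨ d ⊆ S₂ := by
  by_contra! h
  obtain ⟨⟨u, hud, hu₁⟩, ⟨v, hvd, hv₂⟩⟩ := And.imp Set.not_subset.mp Set.not_subset.mp h
  have hv₁ : v ∈ S₁ := (hcover ▸ Set.mem_univ v : v ∈ S₁ ∪ S₂).resolve_right hv₂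
  have huv : u ≠ v := by rintro rfl; exact hu₁ hv₁
  rcases hedges u v (hd hud hvd huv) with ⟨h₁, -⟩ | ⟨-, h₂⟩
  · exact hu₁ h₁
  · exact hv₂ h₂

theorem MaxCliqueIn.univ_of_cover (hcover : S₁ ∪ S₂ = Set.univ)
    (hedges : ∀ u v : V, G.Adj u v → (u ∈ S₁ ∧ v ∈ S₁) ∨ (u ∈ S₂ ∧ v ∈ S₂))
    (hK : G.IsClique (S₁ ∩ S₂)) (hK₁ : ¬ MaxCliqueIn G S₁ (S₁ ∩ S₂)) {K : Set V}
    (h : MaxCliqueIn G S₁ K) : MaxCliqueIn G Set.univ K := by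
  refine ⟨Set.subset_univ K, h.2.1, fun d _ hd hKd => ?_⟩
  rcases hd.subset_or_subset_of_cover_s15 hcover hedges with hd₁ | hd₂
  · exact h.2.2 d hd₁ hd hKd
  · exact absurd (Set.subset_inter h.1 (hKd.trans hd₂))
      (h.not_subset_of_not_maxCliqueIn Set.inter_subset_left hK hK₁)

theorem maxCliqueIn_univ_iff_of_cover (hcover : S₁ ∪ S₂ = Set.univ)
    (hedges : ∀ u v : V, G.Adj u v → (u ∈ S₁ ∧ v ∈ S₁) ∨ (u ∈ S₂ ∧ v ∈ S₂))
    (hK : G.IsClique (S₁ ∩ S₂)) (hK₁ : ¬ MaxCliqueIn G S₁ (S₁ ∩ S₂))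
    (hK₂ : ¬ MaxCliqueIn G S₂ (S₁ ∩ S₂)) (K : Set V) :
    MaxCliqueIn G Set.univ K ↔ MaxCliqueIn G S₁ K ∨ MaxCliqueIn G S₂ K := by
  constructor
  · intro h
    exact (h.2.1.subset_or_subset_of_cover_s15 hcover hedges).imp
      (h.restrict · (Set.subset_univ _)) (h.restrict · (Set.subset_univ _))
  · rintro (h | h)
    · exact h.univ_of_cover hcover hedges hK hK₁
    · rw [Set.inter_comm] at hK hK₂
      exact h.univ_of_cover (Set.union_comm S₁ S₂ ▸ hcover)
        (fun u v huv => (hedges u v huv).symm) hK hK₂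

theorem extGraph_univ_eq_sup
    (hedges : ∀ u v : V, G.Adj u v → (u ∈ S₁ ∧ v ∈ S₁) ∨ (u ∈ S₂ ∧ v ∈ S₂))
    (hmax : ∀ K, MaxCliqueIn G Set.univ K ↔ MaxCliqueIn G S₁ K ∨ MaxCliqueIn G S₂ K) :
    ExtGraph G Set.univ = ExtGraph G S₁ ⊔ ExtGraph G S₂ := by
  ext (a | p) (b | q) <;>
    simp only [ExtGraph, SimpleGraph.sup_adj, Set.mem_univ, true_and, hmax, or_self]
  · exact ⟨fun h => (hedges a b h).imp (fun hab => ⟨hab.1, hab.2, h⟩)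
      (fun hab => ⟨hab.1, hab.2, h⟩), by rintro (⟨-, -, h⟩ | ⟨-, -, h⟩) <;> exact h⟩
  · tauto
  · tauto

theorem extVerts_univ_eq_union (hcover : S₁ ∪ S₂ = Set.univ)
    (hmax : ∀ K, MaxCliqueIn G Set.univ K ↔ MaxCliqueIn G S₁ K ∨ MaxCliqueIn G S₂ K) :
    ExtVerts G Set.univ = ExtVerts G S₁ ∪ ExtVerts G S₂ := by
  ext (a | ⟨K, u⟩)
  · simp [ExtVerts, ← hcover]
  · simpa [ExtVerts, hmax] using or_and_right

theorem extVerts_inter_eq_image_inl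
    (hdisj : ∀ K, MaxCliqueIn G S₁ K → ¬ MaxCliqueIn G S₂ K) :
    ExtVerts G S₁ ∩ ExtVerts G S₂ = Sum.inl '' (S₁ ∩ S₂) := by
  ext (a | p)
  · simp [ExtVerts]
  · simpa [ExtVerts] using fun h₁ _ h₂ _ => hdisj p.1 h₁ h₂

theorem isClique_extGraph_image_inl {S T : Set V} (hT : G.IsClique T) (hTS : T ⊆ S) :
    (ExtGraph G S).IsClique (Sum.inl '' T) := by
  rintro _ ⟨a, ha, rfl⟩ _ ⟨b, hb, rfl⟩ hab
  exact ⟨hTS ha, hTS hb, hT ha hb (ne_of_apply_ne Sum.inl hab)⟩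

end Amalgamation

theorem stmt_15_general {V : Type*} (G : SimpleGraph V) (S₁ S₂ : Set V)
    (hcover : S₁ ∪ S₂ = Set.univ)
    (hedges : ∀ u v : V, G.Adj u v → (u ∈ S₁ ∧ v ∈ S₁) ∨ (u ∈ S₂ ∧ v ∈ S₂))
    (hK : G.IsClique (S₁ ∩ S₂))
    (hK₁ : ¬ MaxCliqueIn G S₁ (S₁ ∩ S₂))
    (hK₂ : ¬ MaxCliqueIn G S₂ (S₁ ∩ S₂)) :
    ExtGraph G Set.univ = ExtGraph G S₁ ⊔ ExtGraph G S₂ ∧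
    ExtVerts G Set.univ = ExtVerts G S₁ ∪ ExtVerts G S₂ ∧
    ExtVerts G S₁ ∩ ExtVerts G S₂ = Sum.inl '' (S₁ ∩ S₂) ∧
    (ExtGraph G Set.univ).IsClique (Sum.inl '' (S₁ ∩ S₂)) := by
  have hmax := maxCliqueIn_univ_iff_of_cover hcover hedges hK hK₁ hK₂
  have hdisj : ∀ K, MaxCliqueIn G S₁ K → ¬ MaxCliqueIn G S₂ K := fun K h₁ h₂ =>
    h₁.not_subset_of_not_maxCliqueIn Set.inter_subset_left hK hK₁ (Set.subset_inter h₁.1 h₂.1)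
  exact ⟨extGraph_univ_eq_sup hedges hmax, extVerts_univ_eq_union hcover hmax,
    extVerts_inter_eq_image_inl hdisj, isClique_extGraph_image_inl hK (Set.subset_univ _)⟩

theorem stmt_15 {V : Type*} [Fintype V] (G : SimpleGraph V) (S₁ S₂ : Set V)
    (hcover : S₁ ∪ S₂ = Set.univ)
    (hedges : ∀ u v : V, G.Adj u v → (u ∈ S₁ ∧ v ∈ S₁) ∨ (u ∈ S₂ ∧ v ∈ S₂))
    (hK : G.IsClique (S₁ ∩ S₂))
    (hK₁ : ¬ MaxCliqueIn G S₁ (S₁ ∩ S₂))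
    (hK₂ : ¬ MaxCliqueIn G S₂ (S₁ ∩ S₂)) :
    ExtGraph G Set.univ = ExtGraph G S₁ ⊔ ExtGraph G S₂ ∧
    ExtVerts G Set.univ = ExtVerts G S₁ ∪ ExtVerts G S₂ ∧
    ExtVerts G S₁ ∩ ExtVerts G S₂ = Sum.inl '' (S₁ ∩ S₂) ∧
    (ExtGraph G Set.univ).IsClique (Sum.inl '' (S₁ ∩ S₂)) :=
  stmt_15_general G S₁ S₂ hcover hedges hK hK₁ hK₂
end

section
/- Let S be a group all of whose 2-generated subgroups are free, let A and B be groups, and let φ : S → A × B be an injective homomorphism. Then the composition of φ with the projection onto A is injective, or the composition of φ with the projection onto B is injective. -/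
/-! If neither projection is injective, pick `x ≠ 1` with `φ x = (1, b)` and `y ≠ 1` with
`φ y = (a, 1)`. The images commute, so `x` and `y` commute, and the free group `⟨x, y⟩` is
commutative, hence cyclic (a free group on two distinct generators is not commutative) and
torsion-free. So `x` and `y` have a common nontrivial power `x ^ m = y ^ n`, whose image under `φ`
is `(1, 1)`, contradicting injectivity. -/

theorem FreeGroup.not_commute_of_ne {ι : Type*} {i j : ι} (hij : i ≠ j) :
    ¬Commute (of i) (of j) := by
  classical
  intro h
  simpa [toWord_mul, hij] using congrArg toWord h.eq

instance FreeGroup.isCyclic_of_subsingleton {ι : Type*} [Subsingleton ι] :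
    IsCyclic (FreeGroup ι) := by
  cases isEmpty_or_nonempty ι
  · infer_instance
  · have : Unique ι := uniqueOfSubsingleton (Classical.arbitrary _)
    infer_instance

namespace IsFreeGroup

variable {G : Type*} [Group G] [IsFreeGroup G]

instance isMulTorsionFree : IsMulTorsionFree G :=
  (toFreeGroup G).injective.isMulTorsionFree (toFreeGroup G).toMonoidHom

variable [IsMulCommutative G]

theorem subsingleton_generators_of_isMulCommutative : Subsingleton (Generators G) := by
  refine ⟨fun i j => by_contra fun hij => FreeGroup.not_commute_of_ne hij ?_⟩
  have hcomm : Commute ((toFreeGroup G).symm (.of i)) ((toFreeGroup G).symm (.of j)) :=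
    mul_comm' _ _
  simpa using hcomm.map (toFreeGroup G)

theorem isCyclic_of_isMulCommutative : IsCyclic G :=
  have := subsingleton_generators_of_isMulCommutative (G := G)
  isCyclic_of_surjective (toFreeGroup G).symm (toFreeGroup G).symm.surjective

end IsFreeGroup

theorem IsCyclic.exists_zpow_eq_zpow_ne_one {G : Type*} [Group G] [IsCyclic G]
    [IsMulTorsionFree G] {x y : G} (hx : x ≠ 1) (hy : y ≠ 1) :
    ∃ m n : ℤ, x ^ m = y ^ n ∧ x ^ m ≠ 1 := by
  obtain ⟨g, hg⟩ := IsCyclic.exists_generator (α := G)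
  obtain ⟨a, rfl⟩ := hg x
  obtain ⟨b, rfl⟩ := hg y
  refine ⟨b, a, by simp only [← zpow_mul, mul_comm], ?_⟩
  rw [← zpow_mul]
  simp_all [IsMulTorsionFree.zpow_eq_one_iff]

theorem Commute.exists_zpow_eq_zpow_ne_one {G : Type*} [Group G] {x y : G}
    (hfree : IsFreeGroup (Subgroup.closure {x, y})) (hxy : Commute x y) (hx : x ≠ 1)
    (hy : y ≠ 1) : ∃ m n : ℤ, x ^ m = y ^ n ∧ x ^ m ≠ 1 := by
  have hcomm : ∀ a ∈ ({x, y} : Set G), ∀ b ∈ ({x, y} : Set G), a * b = b * a := by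
    simp only [Set.mem_insert_iff, Set.mem_singleton_iff]
    rintro _ (rfl | rfl) _ (rfl | rfl)
    exacts [rfl, hxy.eq, hxy.symm.eq, rfl]
  set H := Subgroup.closure ({x, y} : Set G)
  have := Subgroup.isMulCommutative_closure hcomm
  have := IsFreeGroup.isCyclic_of_isMulCommutative (G := H)
  have hxH : x ∈ H := Subgroup.subset_closure (by simp)
  have hyH : y ∈ H := Subgroup.subset_closure (by simp)
  obtain ⟨m, n, heq, hne⟩ := IsCyclic.exists_zpow_eq_zpow_ne_one (G := H) (x := ⟨x, hxH⟩)
    (y := ⟨y, hyH⟩) (by simpa using hx) (by simpa using hy)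
  exact ⟨m, n, congrArg Subtype.val heq, fun h => hne (Subtype.ext h)⟩

namespace MonoidHom

variable {S A B : Type*} [Group S] [Group A] [Group B] {φ : S →* A × B}

theorem commute_of_mem_ker_fst_comp_of_mem_ker_snd_comp (hφ : Function.Injective φ) {x y : S}
    (hx : x ∈ ((fst A B).comp φ).ker) (hy : y ∈ ((snd A B).comp φ).ker) : Commute x y :=
  Commute.of_map hφ (Prod.ext (by simp_all) (by simp_all))

theorem ker_fst_comp_inf_ker_snd_comp (hφ : Function.Injective φ) :
    ((fst A B).comp φ).ker ⊓ ((snd A B).comp φ).ker = ⊥ := by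
  rwa [← ker_prod, prod_unique, ker_eq_bot_iff]

end MonoidHom

theorem stmt_19 {S A B : Type*} [Group S] [Group A] [Group B]
    (hfree : ∀ a b : S, IsFreeGroup (Subgroup.closure {a, b}))
    (φ : S →* A × B) (hφ : Function.Injective φ) :
    Function.Injective ((MonoidHom.fst A B).comp φ) ∨
    Function.Injective ((MonoidHom.snd A B).comp φ) := by
  by_contra! ⟨hA, hB⟩
  simp only [← MonoidHom.ker_eq_bot_iff, Subgroup.eq_bot_iff_forall, not_forall] at hA hB
  obtain ⟨x, hxA, hx⟩ := hA
  obtain ⟨y, hyB, hy⟩ := hB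
  have hxy := MonoidHom.commute_of_mem_ker_fst_comp_of_mem_ker_snd_comp hφ hxA hyB
  obtain ⟨m, n, heq, hne⟩ := hxy.exists_zpow_eq_zpow_ne_one (hfree x y) hx hy
  refine hne (Subgroup.mem_bot.mp ?_)
  rw [← MonoidHom.ker_fst_comp_inf_ker_snd_comp hφ]
  exact ⟨zpow_mem hxA m, heq ▸ zpow_mem hyB n⟩
end
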